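/- Let A be a prime nontrivial superalgebra over a commutative unital ring φ with 1/2 ∈ φ, let I be a nonzero ideal of A, and let U be a graded additive subgroup of A such that [u, y] = 0 (superbracket) for all homogeneous u ∈ U and y ∈ I. Then U ⊆ Z; in particular the odd part U₁ = U ∩ A₁ is zero. -/
import Mathlib


open DirectSum

/-- The sign `(−1)^{ij}` for degrees `i j : ZMod 2`. -/
def ssign (i j : ZMod 2) : ℤ := if i = 1 ∧ j = 1 then -1 else 1

variable {φ A : Type*}

section
variable [CommRing φ] [Ring A] [Algebra φ A]

/-- Superbracket `[x,y] = xy − (−1)^{ij} yx` of homogeneous elements of degrees `i`, `j`. -/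
def sbr (i j : ZMod 2) (x y : A) : A := x * y - ssign i j • (y * x)

/-- Supercircle product `x∘y = xy + (−1)^{ij} yx` of homogeneous elements of degrees `i`, `j`. -/
def scirc (i j : ZMod 2) (x y : A) : A := x * y + ssign i j • (y * x)

/-- A graded two-sided ideal of the superalgebra `A = ⨁ 𝒜 i`. -/
structure SuperIdeal (𝒜 : ZMod 2 → Submodule φ A) [GradedAlgebra 𝒜] where
  carrier : Submodule φ A
  mul_mem_left : ∀ (a x : A), x ∈ carrier → a * x ∈ carrier
  mul_mem_right : ∀ (a x : A), x ∈ carrier → x * a ∈ carrier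
  graded' : ∀ (i : ZMod 2), ∀ x ∈ carrier, ((DirectSum.decompose 𝒜 x) i : A) ∈ carrier

variable (𝒜 : ZMod 2 → Submodule φ A)

/-- A superalgebra is prime if `I⬝J = 0` forces `I = 0` or `J = 0` for graded ideals `I`, `J`. -/
def SuperPrime [GradedAlgebra 𝒜] : Prop :=
  ∀ I J : SuperIdeal 𝒜, (∀ x ∈ I.carrier, ∀ y ∈ J.carrier, x * y = 0) →
    I.carrier = ⊥ ∨ J.carrier = ⊥

/-- A superalgebra is semiprime if it has no nonzero graded ideal of square zero. -/
def SuperSemiprime [GradedAlgebra 𝒜] : Prop :=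
  ∀ I : SuperIdeal 𝒜, (∀ x ∈ I.carrier, ∀ y ∈ I.carrier, x * y = 0) → I.carrier = ⊥

/-- `Z`, the even part of the center of `A`. -/
def evenCenter : Set A := {z : A | z ∈ 𝒜 0 ∧ ∀ x : A, z * x = x * z}

/-- A subset `M` of `A` is dense if the (non-unital) subalgebra of `A` generated by `M`
contains a nonzero ideal of `A`. -/
def IsDenseIn [GradedAlgebra 𝒜] (M : Set A) : Prop :=
  ∃ J : SuperIdeal 𝒜, J.carrier ≠ ⊥ ∧
    (J.carrier : Set A) ⊆ NonUnitalAlgebra.adjoin φ M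

/-- A superinvolution on the superalgebra `A`. -/
structure Superinvolution (𝒜 : ZMod 2 → Submodule φ A) where
  toFun : A →ₗ[φ] A
  grading : ∀ (i : ZMod 2), ∀ x ∈ 𝒜 i, toFun x ∈ 𝒜 i
  invol : ∀ x : A, toFun (toFun x) = x
  mul_rev : ∀ (i j : ZMod 2), ∀ x ∈ 𝒜 i, ∀ y ∈ 𝒜 j,
    toFun (x * y) = ssign i j • (toFun y * toFun x)

/-- A Lie ideal of the Lie superalgebra `K` of skew elements of `(A,*)`: a graded
`φ`-submodule of `K` with `[U,K] ⊆ U`. -/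
structure LieIdealOfSkew [GradedAlgebra 𝒜] (σ : Superinvolution 𝒜) where
  carrier : Submodule φ A
  skew : ∀ x ∈ carrier, σ.toFun x = -x
  graded' : ∀ (i : ZMod 2), ∀ x ∈ carrier, ((DirectSum.decompose 𝒜 x) i : A) ∈ carrier
  bracket_mem : ∀ (i j : ZMod 2) (u k : A), u ∈ carrier → u ∈ 𝒜 i →
    k ∈ 𝒜 j → σ.toFun k = -k → sbr i j u k ∈ carrier

/-- The additive span of superbrackets of homogeneous elements of `S` and `T`. -/
def superBrAdd (S T : Set A) : AddSubgroup A :=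
  AddSubgroup.closure
    {z : A | ∃ (i j : ZMod 2) (x y : A), x ∈ S ∧ x ∈ 𝒜 i ∧ y ∈ T ∧ y ∈ 𝒜 j ∧ z = sbr i j x y}

/-- The `φ`-submodule spanned by superbrackets of homogeneous elements of `S` and `T`. -/
def superBrSpan (S T : Set A) : Submodule φ A :=
  Submodule.span φ
    {z : A | ∃ (i j : ZMod 2) (x y : A), x ∈ S ∧ x ∈ 𝒜 i ∧ y ∈ T ∧ y ∈ 𝒜 j ∧ z = sbr i j x y}

end

/-- Data exhibiting the prime superalgebra `A` as a central order in a simple superalgebra `B`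
that is 4-dimensional over its center. -/
structure CentralOrderIn4DimSimple (φ : Type*) [CommRing φ] {A : Type*} [Ring A] [Algebra φ A]
    (𝒜 : ZMod 2 → Submodule φ A) [GradedAlgebra 𝒜] where
  B : Type
  [ringB : Ring B]
  [algB : Algebra φ B]
  ℬ : ZMod 2 → Submodule φ B
  [gradedB : GradedAlgebra ℬ]
  ι : A →ₐ[φ] B
  inj : Function.Injective ι
  grading : ∀ (i : ZMod 2), ∀ x ∈ 𝒜 i, ι x ∈ ℬ i
  central_unit : ∀ z ∈ evenCenter 𝒜, z ≠ 0 → IsUnit (ι z)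
  localized : ∀ b : B, ∃ z a : A, z ∈ evenCenter 𝒜 ∧ z ≠ 0 ∧ ι z * b = ι a
  sq_ne_zero : ∃ x y : B, x * y ≠ 0
  simple : ∀ J : SuperIdeal ℬ, J.carrier = ⊥ ∨ J.carrier = ⊤
  dim4 : Module.finrank (Subring.center B) B = 4

section Lemma23Aux

open DirectSum

variable {φ A : Type*} [CommRing φ] [Ring A] [Algebra φ A]
variable (𝒜 : ZMod 2 → Submodule φ A) [GradedAlgebra 𝒜]

private lemma ssign_add_right : ∀ i k j : ZMod 2, ssign i (k + j) = ssign i k * ssign i j := by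
  decide

private lemma ssign_zero_left : ∀ j : ZMod 2, ssign 0 j = 1 := by decide

private lemma hsum_decompose (x : A) :
    (decompose 𝒜 x 0 : A) + (decompose 𝒜 x 1 : A) = x := by
  classical
  conv_rhs => rw [← DirectSum.sum_support_decompose 𝒜 x]
  rw [Finset.sum_subset (Finset.subset_univ _) (fun i _ hi => by
    rw [DFinsupp.notMem_support_iff.mp hi]; simp)]
  rw [show (Finset.univ : Finset (ZMod 2)) = {0, 1} by decide]
  simp

private lemma half_cancel [Invertible (2 : φ)] {x : A} (h : x + x = 0) : x = 0 := by
  have h2 : (2 : φ) • x = 0 := by rw [two_smul]; exact h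
  calc x = ⅟(2 : φ) • ((2 : φ) • x) := (invOf_smul_smul _ x).symm
    _ = 0 := by rw [h2, smul_zero]

/-- The left annihilator of a graded ideal, as a graded ideal. -/
private def annIdeal (I : SuperIdeal 𝒜) : SuperIdeal 𝒜 where
  carrier :=
    { carrier := {x | ∀ y ∈ I.carrier, x * y = 0}
      add_mem' := fun {a b} ha hb y hy => by rw [add_mul, ha y hy, hb y hy, add_zero]
      zero_mem' := fun y _ => zero_mul y
      smul_mem' := fun c x hx y hy => by rw [smul_mul_assoc, hx y hy, smul_zero] }
  mul_mem_left := fun a x hx y hy => by rw [mul_assoc, hx y hy, mul_zero]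
  mul_mem_right := fun a x hx y hy => by
    rw [mul_assoc]; exact hx (a * y) (I.mul_mem_left a y hy)
  graded' := by
    intro i x hx y hy
    have key : ∀ (j : ZMod 2), ∀ z ∈ I.carrier, z ∈ 𝒜 j →
        (decompose 𝒜 x i : A) * z = 0 := by
      intro j z hzI hzj
      rw [← DirectSum.coe_decompose_mul_add_of_right_mem 𝒜 hzj, hx z hzI, decompose_zero]
      simp
    have hy0 : (decompose 𝒜 y 0 : A) ∈ I.carrier := I.graded' 0 y hy
    have hy1 : (decompose 𝒜 y 1 : A) ∈ I.carrier := I.graded' 1 y hy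
    calc (decompose 𝒜 x i : A) * y
        = (decompose 𝒜 x i : A) * ((decompose 𝒜 y 0 : A) + (decompose 𝒜 y 1 : A)) := by
          rw [hsum_decompose]
      _ = 0 := by
          rw [mul_add, key 0 _ hy0 (decompose 𝒜 y 0).2, key 1 _ hy1 (decompose 𝒜 y 1).2,
            add_zero]

end Lemma23Aux

/-- **(Lemma 2.3.)** Let `A` be a prime nontrivial superalgebra over a commutative ring `φ`
with `½ ∈ φ`, `I` a nonzero ideal of `A` and `U` a graded additive subgroup of `A` with
`[U, I] = 0`. Then `U ⊆ Z`; in particular `U₁ = 0`. -/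
theorem centralizing_subgroup_in_even_center
    {φ A : Type*} [CommRing φ] [Invertible (2 : φ)] [Ring A] [Algebra φ A]
    (𝒜 : ZMod 2 → Submodule φ A) [GradedAlgebra 𝒜]
    (hprime : SuperPrime 𝒜) (hnontriv : 𝒜 1 ≠ ⊥)
    (I : SuperIdeal 𝒜) (hIne : I.carrier ≠ ⊥)
    (U : AddSubgroup A)
    (hUgr : ∀ (i : ZMod 2), ∀ x ∈ U, ((DirectSum.decompose 𝒜 x) i : A) ∈ U)
    (hcomm : ∀ (i j : ZMod 2), ∀ u ∈ U, u ∈ 𝒜 i → ∀ y ∈ I.carrier, y ∈ 𝒜 j →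
      sbr i j u y = 0) :
    (↑U : Set A) ⊆ evenCenter 𝒜 ∧ ∀ u ∈ U, u ∈ 𝒜 1 → u = 0 := by
  classical
  -- The left annihilator of `I` is zero by primeness.
  have hannbot : (annIdeal 𝒜 I).carrier = ⊥ := by
    rcases hprime (annIdeal 𝒜 I) I (fun x hx y hy => hx y hy) with h | h
    · exact h
    · exact absurd h hIne
  -- Key step: homogeneous elements of `U` supercommute with every homogeneous element of `A`.
  have hkey : ∀ (i k : ZMod 2) (u : A), u ∈ U → u ∈ 𝒜 i → ∀ a ∈ 𝒜 k,
      u * a = ssign i k • (a * u) := by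
    intro i k u hu hui a hak
    have hmem : sbr i k u a ∈ (annIdeal 𝒜 I).carrier := by
      intro y hy
      have key : ∀ (j : ZMod 2), ∀ z ∈ I.carrier, z ∈ 𝒜 j → sbr i k u a * z = 0 := by
        intro j z hzI hzj
        have h1 : u * z - ssign i j • (z * u) = 0 := hcomm i j u hu hui z hzI hzj
        rw [sub_eq_zero] at h1
        have hazI : a * z ∈ I.carrier := I.mul_mem_left a z hzI
        have hazm : a * z ∈ 𝒜 (k + j) := SetLike.mul_mem_graded hak hzj
        have h2 : u * (a * z) - ssign i (k + j) • (a * z * u) = 0 :=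
          hcomm i (k + j) u hu hui (a * z) hazI hazm
        rw [sub_eq_zero] at h2
        calc sbr i k u a * z
            = u * (a * z) - ssign i k • (a * (u * z)) := by
              show (u * a - ssign i k • (a * u)) * z = _
              rw [sub_mul, smul_mul_assoc, mul_assoc, mul_assoc]
          _ = ssign i (k + j) • (a * z * u) - ssign i k • (ssign i j • (a * (z * u))) := by
              rw [h2, h1, mul_smul_comm]
          _ = 0 := by
              rw [ssign_add_right, mul_smul, mul_assoc]
              exact sub_self _
      have hy0 : (DirectSum.decompose 𝒜 y 0 : A) ∈ I.carrier := I.graded' 0 y hy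
      have hy1 : (DirectSum.decompose 𝒜 y 1 : A) ∈ I.carrier := I.graded' 1 y hy
      calc sbr i k u a * y
          = sbr i k u a *
              ((DirectSum.decompose 𝒜 y 0 : A) + (DirectSum.decompose 𝒜 y 1 : A)) := by
            rw [hsum_decompose]
        _ = 0 := by
            rw [mul_add, key 0 _ hy0 (DirectSum.decompose 𝒜 y 0).2,
              key 1 _ hy1 (DirectSum.decompose 𝒜 y 1).2, add_zero]
    rw [hannbot, Submodule.mem_bot] at hmem
    have := sub_eq_zero.mp hmem
    exact this
  -- Odd elements of `U` are zero.
  have hodd : ∀ u ∈ U, u ∈ 𝒜 1 → u = 0 := by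
    intro u hu hu1
    -- `u` squares to zero
    have husq : u * u = 0 := by
      have h := hkey 1 1 u hu hu1 u hu1
      have : u * u + u * u = 0 := by
        nth_rewrite 1 [h]
        simp [ssign]
      exact half_cancel (φ := φ) this
    -- `u` supercommutes with everything
    have hcu : ∀ b : A,
        u * b = ((DirectSum.decompose 𝒜 b 0 : A) - (DirectSum.decompose 𝒜 b 1 : A)) * u := by
      intro b
      have h0 := hkey 1 0 u hu hu1 _ (DirectSum.decompose 𝒜 b 0).2
      have h1 := hkey 1 1 u hu hu1 _ (DirectSum.decompose 𝒜 b 1).2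
      calc u * b = u * ((DirectSum.decompose 𝒜 b 0 : A) + (DirectSum.decompose 𝒜 b 1 : A)) := by
            rw [hsum_decompose]
        _ = _ := by
            rw [mul_add, h0, h1, sub_mul]
            simp [ssign, sub_eq_add_neg]
    -- the principal ideal `A u`
    let J : SuperIdeal 𝒜 :=
      { carrier :=
          { carrier := {x | ∃ a : A, x = a * u}
            add_mem' := by
              rintro x y ⟨a, rfl⟩ ⟨b, rfl⟩
              exact ⟨a + b, (add_mul a b u).symm⟩
            zero_mem' := ⟨0, (zero_mul u).symm⟩
            smul_mem' := by
              rintro c x ⟨a, rfl⟩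
              exact ⟨c • a, (smul_mul_assoc c a u).symm⟩ }
        mul_mem_left := by
          rintro b x ⟨a, rfl⟩
          exact ⟨b * a, (mul_assoc b a u).symm⟩
        mul_mem_right := by
          rintro b x ⟨a, rfl⟩
          exact ⟨a * ((DirectSum.decompose 𝒜 b 0 : A) - (DirectSum.decompose 𝒜 b 1 : A)), by
            rw [mul_assoc, hcu b, mul_assoc]⟩
        graded' := by
          rintro m x ⟨a, rfl⟩
          refine ⟨(DirectSum.decompose 𝒜 a (m + 1) : A), ?_⟩
          have hm : m + 1 + 1 = m := by
            rw [add_assoc, show (1 : ZMod 2) + 1 = 0 by decide, add_zero]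
          rw [← DirectSum.coe_decompose_mul_add_of_right_mem 𝒜 hu1 (i := m + 1), hm] }
    have hJsq : ∀ x ∈ J.carrier, ∀ y ∈ J.carrier, x * y = 0 := by
      rintro x ⟨a, rfl⟩ y ⟨b, rfl⟩
      calc a * u * (b * u) = a * (u * b * u) := by rw [mul_assoc, ← mul_assoc u b u]
        _ = a * (((DirectSum.decompose 𝒜 b 0 : A) - (DirectSum.decompose 𝒜 b 1 : A)) *
              (u * u)) := by rw [hcu b, mul_assoc]
        _ = 0 := by rw [husq, mul_zero, mul_zero]
    have hJbot : J.carrier = ⊥ := by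
      rcases hprime J J hJsq with h | h
      · exact h
      · exact h
    have : u ∈ J.carrier := ⟨1, (one_mul u).symm⟩
    rw [hJbot, Submodule.mem_bot] at this
    exact this
  refine ⟨?_, hodd⟩
  intro u hu
  have hu' : u ∈ U := hu
  have hu0 : (DirectSum.decompose 𝒜 u 0 : A) ∈ U := hUgr 0 u hu'
  have hu1 : (DirectSum.decompose 𝒜 u 1 : A) ∈ U := hUgr 1 u hu'
  have h1z : (DirectSum.decompose 𝒜 u 1 : A) = 0 :=
    hodd _ hu1 (DirectSum.decompose 𝒜 u 1).2
  have hue : u = (DirectSum.decompose 𝒜 u 0 : A) := by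
    conv_lhs => rw [← hsum_decompose 𝒜 u]
    rw [h1z, add_zero]
  constructor
  · rw [hue]; exact (DirectSum.decompose 𝒜 u 0).2
  · intro x
    have hx0 := hkey 0 0 _ hu0 (DirectSum.decompose 𝒜 u 0).2 _ (DirectSum.decompose 𝒜 x 0).2
    have hx1 := hkey 0 1 _ hu0 (DirectSum.decompose 𝒜 u 0).2 _ (DirectSum.decompose 𝒜 x 1).2
    rw [ssign_zero_left, one_smul] at hx0 hx1
    calc u * x = u * ((DirectSum.decompose 𝒜 x 0 : A) + (DirectSum.decompose 𝒜 x 1 : A)) := by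
          rw [hsum_decompose]
      _ = ((DirectSum.decompose 𝒜 x 0 : A) + (DirectSum.decompose 𝒜 x 1 : A)) * u := by
          rw [mul_add, add_mul, hue, hx0, hx1]
      _ = x * u := by rw [hsum_decompose]
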